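/- arXiv:1101.0530 — 4 statements merged into one kernel-verified Lean document; each statement's English description precedes it below -/
import Mathlib

section
/- Let p and h be integers with p ≥ 5 and h ≥ 2, and set a = (p−3)(h−1)+1. Let β be the greatest real root of the polynomial P(X) = X² − a·X − (h−3). Then every root z of P with z ≠ β satisfies |z| < 1; that is, β is greater than 1 and all other roots of P lie strictly inside the unit circle, so P is a Pisot polynomial. -/
/-! With `c = h - 3`, the value `P(1) = 5 - 3h - (p-5)(h-1)` is negative and
`P(-1) = 3 + h + (p-5)(h-1)` is positive. For a monic quadratic this forces one root
above `1` and the other in `(-1, 1)`; since the roots are `β` and `a - β`, the larger one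
is `β`. -/

section Quadratic

variable {R : Type*} [CommRing R] {a c x : R}

theorem sq_sub_mul_sub_eq_mul_of_root (hx : x ^ 2 - a * x - c = 0) (z : R) :
    z ^ 2 - a * z - c = (z - x) * (z - (a - x)) := by
  linear_combination hx

theorem sub_root_of_root (hx : x ^ 2 - a * x - c = 0) : (a - x) ^ 2 - a * (a - x) - c = 0 := by
  rw [sq_sub_mul_sub_eq_mul_of_root hx, sub_self, mul_zero]

theorem eq_or_eq_sub_of_root [NoZeroDivisors R] (hx : x ^ 2 - a * x - c = 0) {z : R}
    (hz : z ^ 2 - a * z - c = 0) : z = x ∨ z = a - x := by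
  rw [sq_sub_mul_sub_eq_mul_of_root hx] at hz
  simpa only [sub_eq_zero] using mul_eq_zero.mp hz

end Quadratic

theorem one_lt_and_abs_sub_lt_one_of_root {a c β : ℝ} (hβ : β ^ 2 - a * β - c = 0)
    (hle : a - β ≤ β) (h1 : 1 - a - c < 0) (hm1 : 0 < 1 + a - c) :
    1 < β ∧ |a - β| < 1 := by
  have at_one : (1 - β) * (1 - (a - β)) = 1 - a - c := by
    linear_combination -(sq_sub_mul_sub_eq_mul_of_root hβ 1)
  have at_neg_one : (1 + β) * (1 + (a - β)) = 1 + a - c := by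
    linear_combination -(sq_sub_mul_sub_eq_mul_of_root hβ (-1))
  have hβ1 : 1 < β := by
    by_contra! hβ1
    linarith [mul_nonneg (sub_nonneg.mpr hβ1) (sub_nonneg.mpr (hle.trans hβ1))]
  have hγ1 : a - β < 1 := by
    by_contra! hγ1
    linarith [mul_nonneg_of_nonpos_of_nonpos (sub_neg.mpr hβ1).le (sub_nonpos.mpr hγ1)]
  have hγm1 : 0 < 1 + (a - β) :=
    pos_of_mul_pos_right (at_neg_one ▸ hm1) (by linarith)
  exact ⟨hβ1, abs_lt.mpr ⟨by linarith, hγ1⟩⟩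

/-- For integers `p ≥ 5` and `h ≥ 2`, with `a = (p-3)(h-1)+1`, if `β` is the
greatest real root of `P(X) = X² - a·X - (h-3)`, then `β > 1` and every
complex root `z ≠ β` of `P` satisfies `|z| < 1`: `P` is a Pisot polynomial. -/
theorem quadratic_is_pisot (p h : ℤ) (hp : 5 ≤ p) (hh : 2 ≤ h)
    (a : ℝ) (ha : a = ((p : ℝ) - 3) * ((h : ℝ) - 1) + 1)
    (β : ℝ) (hroot : β ^ 2 - a * β - ((h : ℝ) - 3) = 0)
    (hmax : ∀ x : ℝ, x ^ 2 - a * x - ((h : ℝ) - 3) = 0 → x ≤ β) :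
    1 < β ∧
      ∀ z : ℂ, z ^ 2 - (a : ℂ) * z - ((h : ℂ) - 3) = 0 → z ≠ (β : ℂ) →
        ‖z‖ < 1 := by
  have hp' : (5 : ℝ) ≤ p := by exact_mod_cast hp
  have hh' : (2 : ℝ) ≤ h := by exact_mod_cast hh
  have hslack : 0 ≤ ((p : ℝ) - 5) * ((h : ℝ) - 1) := mul_nonneg (by linarith) (by linarith)
  obtain ⟨hβ1, hconj⟩ := one_lt_and_abs_sub_lt_one_of_root hroot
    (hmax _ (sub_root_of_root hroot))
    (by rw [ha]; linarith) (by rw [ha]; linarith)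
  refine ⟨hβ1, fun z hz hzβ => ?_⟩
  have hrootC : (β : ℂ) ^ 2 - a * β - ((h : ℂ) - 3) = 0 := by
    exact_mod_cast congrArg ((↑) : ℝ → ℂ) hroot
  obtain rfl | rfl := eq_or_eq_sub_of_root hrootC hz
  · exact (hzβ rfl).elim
  · rwa [← Complex.ofReal_sub, Complex.norm_real, Real.norm_eq_abs]
end

section
/- Let p and h be integers with p ≥ 5 and h ≥ 2, set a = (p−3)(h−1)+1 and c = (p−2)(h−1)−2, and let β be the greatest real root of the polynomial P(X) = X³ − a·X² − c·X − (h−3). Then every complex root z of P with z ≠ β satisfies |z| < 1; that is, P is a Pisot polynomial. -/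
/-!
Since `P(a) = -(c·a + h - 3) < 0` and `P → ∞`, the greatest real root satisfies `β > a ≥ 3`,
and `a > h - 3`. Dividing by `X - β` leaves the real quadratic `Q = X² + (β - a)·X + t` with
`β·t = h - 3`, so `t < 1`. Both roots of a real quadratic lie in the open unit disc as soon as
`Q(1) > 0`, `Q(-1) > 0` and `t < 1`; here `(±1 - β)·Q(±1) = P(±1) < 0`.
-/

open Filter Polynomial Set

def cubic {R : Type*} [CommRing R] (a c d x : R) : R := x ^ 3 - a * x ^ 2 - c * x - d

theorem cubic_eq_mul_quadratic {R : Type*} [CommRing R] {a c d β : R}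
    (hβ : cubic a c d β = 0) (x : R) :
    cubic a c d x = (x - β) * (x ^ 2 + (β - a) * x + (β ^ 2 - a * β - c)) := by
  unfold cubic at *
  linear_combination hβ

theorem tendsto_cubic_atTop (a c d : ℝ) : Tendsto (cubic a c d) atTop atTop := by
  have hP : cubic a c d = fun x => (X ^ 3 - C a * X ^ 2 - C c * X - C d).eval x := by
    ext x; simp [cubic]
  have hmonic : (X ^ 3 - C a * X ^ 2 - C c * X - C d : ℝ[X]).Monic := by monicity!
  rw [hP]
  have hdeg : (X ^ 3 - C a * X ^ 2 - C c * X - C d : ℝ[X]).degree = 3 := by compute_degree!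
  exact tendsto_atTop_of_leadingCoeff_nonneg _ (by rw [hdeg]; norm_num)
    (by rw [hmonic.leadingCoeff]; exact zero_le_one)

theorem lt_of_cubic_neg {a c d β r : ℝ} (hmax : ∀ x, cubic a c d x = 0 → x ≤ β)
    (hr : cubic a c d r < 0) : r < β := by
  have hcont : Continuous (cubic a c d) := by unfold cubic; fun_prop
  obtain ⟨x, hrx, hx⟩ := intermediate_value_Ici hcont.continuousOn (tendsto_cubic_atTop a c d)
    (mem_Ici.2 hr.le)
  have hxr : x ≠ r := by rintro rfl; exact hr.ne hx
  exact (lt_of_le_of_ne hrx hxr.symm).trans_le (hmax x hx)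

theorem sq_lt_one_of_quadratic_eq_zero {s t x : ℝ} (h₁ : 0 < 1 + s + t) (h₂ : 0 < 1 - s + t)
    (ht : t < 1) (hx : x ^ 2 + s * x + t = 0) : x ^ 2 < 1 := by
  rw [sq_lt_one_iff_abs_lt_one, abs_lt]
  constructor <;> by_contra! hx'
  · have : (x + 1) * (x - 1 + s) = -(1 - s + t) := by linear_combination hx
    nlinarith
  · have : (x - 1) * (x + 1 + s) = -(1 + s + t) := by linear_combination hx
    nlinarith

theorem Complex.norm_lt_one_of_quadratic_eq_zero {s t : ℝ} (h₁ : 0 < 1 + s + t)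
    (h₂ : 0 < 1 - s + t) (ht : t < 1) {z : ℂ} (hz : z ^ 2 + s * z + t = 0) : ‖z‖ < 1 := by
  have hre : z.re ^ 2 - z.im ^ 2 + s * z.re + t = 0 := by
    simpa [sq] using congrArg Complex.re hz
  have him : z.im * (2 * z.re + s) = 0 := by
    have := congrArg Complex.im hz
    simp only [sq, Complex.add_im, Complex.mul_im, Complex.ofReal_re, Complex.ofReal_im,
      zero_mul, add_zero, Complex.zero_im] at this
    linear_combination this
  rw [← sq_lt_one_iff₀ (norm_nonneg z), Complex.sq_norm, Complex.normSq_apply]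
  rcases mul_eq_zero.1 him with hy | hx
  · rw [hy] at hre ⊢
    nlinarith [sq_lt_one_of_quadratic_eq_zero h₁ h₂ ht (x := z.re) (by linear_combination hre)]
  · linear_combination -hre + z.re * hx + ht

theorem norm_lt_one_of_cubic_eq_zero {a c d β : ℝ} (hβ : cubic a c d β = 0) (hβ₁ : 1 < β)
    (hdβ : d < β) (h_one : cubic a c d 1 < 0) (h_neg_one : cubic a c d (-1) < 0) {z : ℂ}
    (hz : cubic (a : ℂ) c d z = 0) (hzβ : z ≠ β) : ‖z‖ < 1 := by
  set t := β ^ 2 - a * β - c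
  have ht : t < 1 := by
    have : β * t = d := by unfold cubic at hβ; linear_combination hβ
    nlinarith
  have hQ_one : 0 < 1 + (β - a) + t := by
    have : (1 - β) * (1 + (β - a) + t) = cubic a c d 1 := by
      rw [cubic_eq_mul_quadratic hβ]; ring
    nlinarith
  have hQ_neg_one : 0 < 1 - (β - a) + t := by
    have : (-1 - β) * (1 - (β - a) + t) = cubic a c d (-1) := by
      rw [cubic_eq_mul_quadratic hβ]; ring
    nlinarith
  rw [cubic_eq_mul_quadratic (β := (β : ℂ)) (by unfold cubic at hβ ⊢; exact_mod_cast hβ)] at hz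
  refine Complex.norm_lt_one_of_quadratic_eq_zero hQ_one hQ_neg_one ht ?_
  push_cast [t]
  exact (mul_eq_zero.1 hz).resolve_left (sub_ne_zero.2 hzβ)

/-- For integers `p ≥ 5` and `h ≥ 2`, with `a = (p-3)(h-1)+1` and
`c = (p-2)(h-1)-2`, if `β` is the greatest real root of
`P(X) = X³ - a·X² - c·X - (h-3)`, then every complex root `z ≠ β` of `P`
satisfies `|z| < 1`: `P` is a Pisot polynomial. -/
theorem cubic_is_pisot (p h : ℤ) (hp : 5 ≤ p) (hh : 2 ≤ h)
    (a c : ℝ) (ha : a = ((p : ℝ) - 3) * ((h : ℝ) - 1) + 1)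
    (hc : c = ((p : ℝ) - 2) * ((h : ℝ) - 1) - 2)
    (β : ℝ) (hroot : β ^ 3 - a * β ^ 2 - c * β - ((h : ℝ) - 3) = 0)
    (hmax : ∀ x : ℝ, x ^ 3 - a * x ^ 2 - c * x - ((h : ℝ) - 3) = 0 → x ≤ β) :
    1 < β ∧
      ∀ z : ℂ, z ^ 3 - (a : ℂ) * z ^ 2 - (c : ℂ) * z - ((h : ℂ) - 3) = 0 →
        z ≠ (β : ℂ) → ‖z‖ < 1 := by
  have hp' : (5 : ℝ) ≤ p := by exact_mod_cast hp
  have hh' : (2 : ℝ) ≤ h := by exact_mod_cast hh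
  have ha_ge : 3 ≤ a := by rw [ha]; nlinarith
  have hc_ge : 1 ≤ c := by rw [hc]; nlinarith
  have hd_lt : (h : ℝ) - 3 < a := by rw [ha]; nlinarith
  have hβa : a < β := lt_of_cubic_neg hmax <| by
    have : cubic a c ((h : ℝ) - 3) a = -(c * a + ((h : ℝ) - 3)) := by unfold cubic; ring
    rw [this]; nlinarith
  have h_one : cubic a c ((h : ℝ) - 3) 1 < 0 := by unfold cubic; rw [ha, hc]; nlinarith
  have h_neg_one : cubic a c ((h : ℝ) - 3) (-1) = -2 := by unfold cubic; rw [ha, hc]; ring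
  refine ⟨by linarith, fun z hz hzβ => norm_lt_one_of_cubic_eq_zero hroot (by linarith)
    (by linarith) h_one (by linarith) ?_ hzβ⟩
  unfold cubic; push_cast; exact hz
end

section
/- Let u : ℕ → ℕ be a strictly increasing sequence with u(0) = 1. Then for every natural number n there exists a unique finitely supported function a : ℕ → ℕ such that n = Σᵢ a(i)·u(i) and, for every j, Σ_{i<j} a(i)·u(i) < u(j). -/
/-!
Write `S j = ∑_{i<j} a i * u i`. Since `S (j+1) = S j + a j * u j` and the greedy condition says
`S j < u j`, division with remainder gives `a j = S (j+1) / u j` and `S j = S (j+1) % u j`.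
Far enough out `S j = n`, so the recursion downwards determines every `S j`, hence every digit:
this is uniqueness. Existence is the same recursion run forwards: if `n < u (J+1)`, write
`n = q * u J + r` with `r < u J`, represent `r` by induction on `J` and add the digit `q` at `J`.
-/

namespace GreedyRepresentation

open Finset

variable (u : ℕ → ℕ)

def partialSum (a : ℕ →₀ ℕ) (j : ℕ) : ℕ := ∑ i ∈ range j, a i * u i

def IsGreedy (a : ℕ →₀ ℕ) : Prop := ∀ j, partialSum u a j < u j

variable {u}

theorem partialSum_succ (a : ℕ →₀ ℕ) (j : ℕ) :
    partialSum u a (j + 1) = partialSum u a j + a j * u j :=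
  sum_range_succ _ _

theorem partialSum_congr {a b : ℕ →₀ ℕ} {j : ℕ} (h : ∀ i < j, a i = b i) :
    partialSum u a j = partialSum u b j :=
  sum_congr rfl fun i hi => by rw [h i (mem_range.mp hi)]

theorem partialSum_eq_sum {a : ℕ →₀ ℕ} {j : ℕ} (h : a.support ⊆ range j) :
    partialSum u a j = a.sum (fun i c => c * u i) :=
  (a.sum_of_support_subset h (fun i c => c * u i) fun _ _ => zero_mul _).symm

namespace IsGreedy

variable {a b : ℕ →₀ ℕ}

theorem partialSum_eq_mod (ha : IsGreedy u a) (j : ℕ) :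
    partialSum u a j = partialSum u a (j + 1) % u j := by
  rw [partialSum_succ, Nat.add_mul_mod_self_right, Nat.mod_eq_of_lt (ha j)]

theorem apply_eq_div (ha : IsGreedy u a) (j : ℕ) :
    a j = partialSum u a (j + 1) / u j := by
  rw [partialSum_succ, Nat.add_mul_div_right _ _ (Nat.zero_lt_of_lt (ha j)),
    Nat.div_eq_of_lt (ha j), zero_add]

theorem partialSum_eq_of_le (ha : IsGreedy u a) (hb : IsGreedy u b) {J : ℕ}
    (hJ : partialSum u a J = partialSum u b J) {j : ℕ} (hj : j ≤ J) :
    partialSum u a j = partialSum u b j :=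
  Nat.decreasingInduction (motive := fun j _ => partialSum u a j = partialSum u b j)
    (fun k _ ih => by rw [ha.partialSum_eq_mod, hb.partialSum_eq_mod, ih]) hJ hj

theorem eq_of_sum_eq (ha : IsGreedy u a) (hb : IsGreedy u b)
    (h : a.sum (fun i c => c * u i) = b.sum (fun i c => c * u i)) : a = b := by
  obtain ⟨J, hJ⟩ := exists_nat_subset_range (a.support ∪ b.support)
  have hsum : ∀ j, partialSum u a j = partialSum u b j := fun j => by
    refine ha.partialSum_eq_of_le hb ?_ (le_max_left j J)
    have hrange : range J ⊆ range (max j J) := range_subset_range.mpr (le_max_right j J)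
    rw [partialSum_eq_sum ((subset_union_left.trans hJ).trans hrange),
      partialSum_eq_sum ((subset_union_right.trans hJ).trans hrange), h]
  ext i
  rw [ha.apply_eq_div, hb.apply_eq_div, hsum]

end IsGreedy

theorem exists_isGreedy_of_lt (hu : Monotone u) (hu0 : u 0 = 1) {J n : ℕ} (hn : n < u J) :
    ∃ a : ℕ →₀ ℕ, IsGreedy u a ∧ a.support ⊆ range J ∧ a.sum (fun i c => c * u i) = n := by
  have hpos : ∀ j, 0 < u j := fun j => by
    have := hu (Nat.zero_le j)
    omega
  induction J generalizing n with
  | zero =>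
    refine ⟨0, fun j => by simpa [partialSum] using hpos j, by simp, ?_⟩
    rw [hu0] at hn
    simp [Nat.lt_one_iff.mp hn]
  | succ J ih =>
    obtain ⟨b, hb, hb_supp, hb_sum⟩ := ih (Nat.mod_lt n (hpos J))
    classical
    set a := b.update J (n / u J)
    have hab : ∀ i < J, a i = b i := fun i hi => by
      simp [a, Finsupp.update_apply, hi.ne]
    have ha_supp : a.support ⊆ range (J + 1) := by
      refine (b.support_update_subset J).trans (insert_subset ?_ ?_)
      · exact self_mem_range_succ J
      · exact hb_supp.trans (range_subset_range.mpr J.le_succ)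
    have ha_sum : a.sum (fun i c => c * u i) = n := by
      rw [← partialSum_eq_sum ha_supp, partialSum_succ, partialSum_congr hab,
        partialSum_eq_sum hb_supp, hb_sum]
      simp [a, Nat.mod_add_div']
    refine ⟨a, fun j => ?_, ha_supp, ha_sum⟩
    rcases le_or_gt j J with hj | hj
    · rw [partialSum_congr fun i hi => hab i (hi.trans_le hj)]
      exact hb j
    · rw [partialSum_eq_sum (ha_supp.trans (range_subset_range.mpr hj)), ha_sum]
      exact hn.trans_le (hu hj)

end GreedyRepresentation

/-- Let `u : ℕ → ℕ` be strictly increasing with `u 0 = 1`. Then every natural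
number `n` has a unique greedy representation: a finitely supported
`a : ℕ → ℕ` with `n = Σᵢ a i * u i` and, for every `j`,
`Σ_{i<j} a i * u i < u j`. -/
theorem greedy_representation_exists_unique (u : ℕ → ℕ)
    (hu : StrictMono u) (hu0 : u 0 = 1) (n : ℕ) :
    ∃! a : ℕ →₀ ℕ,
      n = a.sum (fun i c => c * u i) ∧
      ∀ j : ℕ, ∑ i ∈ Finset.range j, a i * u i < u j := by
  obtain ⟨a, ha, -, ha_sum⟩ := GreedyRepresentation.exists_isGreedy_of_lt hu.monotone hu0
    (Nat.lt_succ_self n |>.trans_le hu.le_apply)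
  refine ⟨a, ⟨ha_sum.symm, ha⟩, fun b ⟨hb_sum, hb⟩ => ?_⟩
  exact GreedyRepresentation.IsGreedy.eq_of_sum_eq hb ha (hb_sum.symm.trans ha_sum.symm)
end

section
/- Let p and h be integers with p ≥ 5 and h ≥ 4, set a = (p−3)(h−1)+1, and define u : ℕ → ℕ by u₀ = 1, u₁ = a, and u_{n+2} = a·u_{n+1} + (h−3)·u_n. Then every natural number n can be written as n = Σᵢ a(i)·u(i) for some finitely supported function a : ℕ → ℕ with a(i) ≤ (p−3)(h−1)+1 for all i. -/
/-!
The greedy algorithm works in any numeration basis `u` with `u 0 = 1` and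
`u (k + 1) ≤ (b + 1) * u k`: for `n < u (N + 1)` the leading digit `n / u N` is at most `b`,
and the remainder `n % u N < u N` is written with the lower positions. For the recurrence
`u (n + 2) = a * u (n + 1) + c * u n` one has `a * u n ≤ u (n + 1)`; with `c ≤ a` this gives the
ratio bound with `b = a`, and `a ^ n ≤ u n` makes the basis unbounded once `a ≥ 2`.
-/

open Finset

section GreedyDigits

variable {u : ℕ → ℕ} {b : ℕ}

theorem exists_digits_support_subset_of_lt (hu0 : u 0 ≤ 1)
    (hsucc : ∀ k, u (k + 1) ≤ (b + 1) * u k) (N : ℕ) :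
    ∀ n < u N, ∃ d : ℕ →₀ ℕ, n = d.sum (fun i c => c * u i) ∧ (∀ i, d i ≤ b) ∧
      d.support ⊆ range N := by
  induction N with
  | zero =>
    intro n hn
    obtain rfl : n = 0 := by omega
    exact ⟨0, by simp, by simp, by simp⟩
  | succ N ih =>
    intro n hn
    have hpos : 0 < u N := by
      by_contra! h0
      have := hsucc N
      simp_all
    obtain ⟨d, hd, hdb, hds⟩ := ih (n % u N) (Nat.mod_lt _ hpos)
    have hdN : d N = 0 := Finsupp.notMem_support_iff.mp fun h => by simpa using hds h
    have hq : n / u N ≤ b := Nat.lt_succ_iff.mp <|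
      (Nat.div_lt_iff_lt_mul hpos).mpr (hn.trans_le (hsucc N))
    refine ⟨d + Finsupp.single N (n / u N), ?_, fun i => ?_, ?_⟩
    · rw [Finsupp.sum_add_index' (fun _ => zero_mul _) (fun _ _ _ => add_mul _ _ _),
        Finsupp.sum_single_index (zero_mul _), ← hd, add_comm]
      exact (Nat.div_add_mod' n (u N)).symm
    · rcases eq_or_ne i N with rfl | hiN
      · simpa [hdN] using hq
      · simpa [Finsupp.single_eq_of_ne hiN] using hdb i
    · refine Finsupp.support_add.trans (union_subset ?_ ?_)
      · exact hds.trans (range_subset_range.mpr N.le_succ)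
      · exact Finsupp.support_single_subset.trans (by simp)

theorem exists_digits_of_succ_le (hu0 : u 0 ≤ 1) (hsucc : ∀ k, u (k + 1) ≤ (b + 1) * u k)
    (hunbdd : ∀ n, ∃ N, n < u N) (n : ℕ) :
    ∃ d : ℕ →₀ ℕ, n = d.sum (fun i c => c * u i) ∧ ∀ i, d i ≤ b := by
  obtain ⟨N, hN⟩ := hunbdd n
  obtain ⟨d, hd, hdb, -⟩ := exists_digits_support_subset_of_lt hu0 hsucc N n hN
  exact ⟨d, hd, hdb⟩

end GreedyDigits

section SecondOrderRecurrence

variable {u : ℕ → ℕ} {a c : ℕ} (hu0 : u 0 = 1) (hu1 : u 1 = a)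
  (hrec : ∀ n, u (n + 2) = a * u (n + 1) + c * u n)
include hu0 hu1 hrec

theorem mul_le_succ_of_rec : ∀ n, a * u n ≤ u (n + 1)
  | 0 => by simp [hu0, hu1]
  | n + 1 => by rw [hrec]; exact Nat.le_add_right _ _

theorem pow_le_of_rec (n : ℕ) : a ^ n ≤ u n := by
  induction n with
  | zero => simp [hu0]
  | succ n ih =>
    calc a ^ (n + 1) = a * a ^ n := pow_succ' a n
      _ ≤ a * u n := Nat.mul_le_mul_left a ih
      _ ≤ u (n + 1) := mul_le_succ_of_rec hu0 hu1 hrec n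

theorem succ_le_of_rec (hca : c ≤ a) : ∀ n, u (n + 1) ≤ (a + 1) * u n
  | 0 => by simp [hu0, hu1]
  | n + 1 =>
    calc u (n + 2) = a * u (n + 1) + c * u n := hrec n
      _ ≤ a * u (n + 1) + a * u n := by gcongr
      _ ≤ a * u (n + 1) + u (n + 1) := by gcongr; exact mul_le_succ_of_rec hu0 hu1 hrec n
      _ = (a + 1) * u (n + 1) := by ring

end SecondOrderRecurrence

/-- For `p ≥ 5`, `h ≥ 4`, with `a = (p-3)(h-1)+1` and the sequence `u 0 = 1`,
`u 1 = a`, `u (n+2) = a·u (n+1) + (h-3)·u n`, every natural number `n` can be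
written `n = Σᵢ d i * u i` with digits `d i ≤ (p-3)(h-1)+1`. -/
theorem representation_with_bounded_digits (p h : ℕ) (hp : 5 ≤ p) (hh : 4 ≤ h)
    (a : ℕ) (ha : a = (p - 3) * (h - 1) + 1)
    (u : ℕ → ℕ) (hu0 : u 0 = 1) (hu1 : u 1 = a)
    (hrec : ∀ n, u (n + 2) = a * u (n + 1) + (h - 3) * u n) :
    ∀ n : ℕ, ∃ d : ℕ →₀ ℕ,
      n = d.sum (fun i c => c * u i) ∧
      ∀ i : ℕ, d i ≤ (p - 3) * (h - 1) + 1 := by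
  have h_le_a : h - 3 ≤ a := by
    have := Nat.le_mul_of_pos_left (h - 1) (show 0 < p - 3 by omega)
    omega
  have two_le_a : 2 ≤ a := by
    have := Nat.mul_le_mul (show 2 ≤ p - 3 by omega) (show 1 ≤ h - 1 by omega)
    omega
  have hunbdd : ∀ n, ∃ N, n < u N := fun n =>
    ⟨n, (Nat.lt_pow_self two_le_a).trans_le (pow_le_of_rec hu0 hu1 hrec n)⟩
  rw [← ha]
  exact exists_digits_of_succ_le hu0.le (succ_le_of_rec hu0 hu1 hrec h_le_a) hunbdd
end
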